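/- arXiv:1003.0762 — 11 statements merged into one kernel-verified Lean document; each statement's English description precedes it below -/
import Mathlib

section
/- Let H and K be measurable spaces, let Q be a Markov kernel on the product space H × K, and let R be a Markov kernel on K such that for every (x,h) ∈ H × K the pushforward of the measure Q(x,h) under the second projection H × K → K equals R(h). If ν is a probability measure on H × K that is invariant for Q (i.e. ν.bind Q = ν), then its second marginal λ = ν.map Prod.snd is invariant for R (i.e. λ.bind R = λ). -/
open MeasureTheory ProbabilityTheory

namespace MeasureTheory.Measure

variable {α β γ : Type*} {mα : MeasurableSpace α} {mβ : MeasurableSpace β}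
  {mγ : MeasurableSpace γ}

lemma comp_map_eq_comap_comp (μ : Measure α) (κ : Kernel β γ) {f : α → β} (hf : Measurable f) :
    κ ∘ₘ μ.map f = κ.comap f hf ∘ₘ μ := by
  rw [← deterministic_comp_eq_map hf, comp_assoc, Kernel.comp_deterministic_eq_comap]

lemma map_comp_eq_of_comp_eq {μ : Measure α} {Q : Kernel α α} {R : Kernel β β} {f : α → β}
    (hf : Measurable f) (hQR : Q.map f = R.comap f hf) (hμ : Q ∘ₘ μ = μ) :
    R ∘ₘ μ.map f = μ.map f := by
  calc R ∘ₘ μ.map f = R.comap f hf ∘ₘ μ := comp_map_eq_comap_comp μ R hf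
    _ = (Q ∘ₘ μ).map f := by rw [map_comp μ Q hf, hQR]
    _ = μ.map f := by rw [hμ]

end MeasureTheory.Measure

theorem second_marginal_invariant_general
    {H K : Type*} [MeasurableSpace H] [MeasurableSpace K]
    (Q : Kernel (H × K) (H × K))
    (R : Kernel K K)
    (hQR : ∀ z : H × K, (Q z).map Prod.snd = R z.2)
    (ν : Measure (H × K))
    (hν : ν.bind ⇑Q = ν) :
    (ν.map Prod.snd).bind ⇑R = ν.map Prod.snd := by
  have hlump : Q.map Prod.snd = R.comap Prod.snd measurable_snd := by
    ext1 z
    rw [Kernel.map_apply _ measurable_snd, Kernel.comap_apply, hQR]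
  exact Measure.map_comp_eq_of_comp_eq measurable_snd hlump hν

/-- Lemma 3.1: the second marginal of an invariant measure of the enlarged Markov
process `Z = (X, H)` on `H × K` is invariant for the driving kernel `R` on `K`. -/
theorem second_marginal_invariant
    {H K : Type*} [MeasurableSpace H] [MeasurableSpace K]
    (Q : Kernel (H × K) (H × K)) [IsMarkovKernel Q]
    (R : Kernel K K) [IsMarkovKernel R]
    (hQR : ∀ z : H × K, (Q z).map Prod.snd = R z.2)
    (ν : Measure (H × K)) [IsProbabilityMeasure ν]
    (hν : ν.bind ⇑Q = ν) :
    (ν.map Prod.snd).bind ⇑R = ν.map Prod.snd :=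
  second_marginal_invariant_general Q R hQR ν hν
end

section
/- Let H be a metrizable topological space equipped with its Borel σ-algebra and let (P_{s,t})_{s ≤ t, s,t ∈ ℝ} be a two-parameter family of Markov kernels on H satisfying the Chapman–Kolmogorov property. Assume: (strong Feller) for all s < t and every bounded measurable f : H → ℝ, the map x ↦ ∫ f d(P_{s,t}(x)) is continuous on H; (irreducibility) for all s < t, every x ∈ H and every nonempty open set O ⊆ H one has P_{s,t}(x)(O) > 0. Then the family is regular: for all s < t and all x, y ∈ H the probability measures P_{s,t}(x) and P_{s,t}(y) are mutually absolutely continuous. -/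
/-!
Split `P s t` by Chapman–Kolmogorov at some `s < r < t`. If `P s t y A = 0`, then
`z ↦ P r t z A` vanishes `P s r y`-almost everywhere; this map is continuous by the strong Feller
property and `P s r y` charges every nonempty open set by irreducibility, so it vanishes
everywhere, whence `P s t x A = 0` as well.
-/

open MeasureTheory ProbabilityTheory

namespace ProbabilityTheory.Kernel

variable {X Y : Type*} [TopologicalSpace X] [MeasurableSpace X] [MeasurableSpace Y]

def IsStrongFeller (κ : Kernel X Y) : Prop :=
  ∀ f : Y → ℝ, Measurable f → (∃ C : ℝ, ∀ y, |f y| ≤ C) → Continuous fun x => ∫ y, f y ∂(κ x)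

lemma IsStrongFeller.continuous_measureReal {κ : Kernel X Y} (hκ : κ.IsStrongFeller)
    {A : Set Y} (hA : MeasurableSet A) : Continuous fun x => (κ x).real A := by
  have hbounded : ∀ y, |A.indicator (1 : Y → ℝ) y| ≤ 1 := fun y => by
    by_cases hy : y ∈ A <;> simp [hy]
  simpa only [integral_indicator_one hA] using
    hκ _ (measurable_one.indicator hA) ⟨1, hbounded⟩

/-- The zero set of the continuous map `x ↦ κ x A` has full `μ`-measure, hence is dense and
closed. -/
lemma IsStrongFeller.apply_eq_zero_of_ae_eq_zero {κ : Kernel X Y} [IsFiniteKernel κ]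
    (hκ : κ.IsStrongFeller) (μ : Measure X) [μ.IsOpenPosMeasure] {A : Set Y}
    (hA : MeasurableSet A) (hnull : ∀ᵐ x ∂μ, κ x A = 0) (x : X) : κ x A = 0 := by
  have hreal : (fun x => (κ x).real A) = fun _ => 0 := by
    refine (hκ.continuous_measureReal hA).ae_eq_iff_eq μ continuous_const |>.mp ?_
    filter_upwards [hnull] with x hx
    simp [measureReal_def, hx]
  simpa [measureReal_def, ENNReal.toReal_eq_zero_iff, measure_ne_top] using congrFun hreal x

lemma IsStrongFeller.bind_absolutelyContinuous {κ : Kernel X Y} [IsFiniteKernel κ]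
    (hκ : κ.IsStrongFeller) (μ ν : Measure X) [μ.IsOpenPosMeasure] :
    ν.bind κ ≪ μ.bind κ := by
  refine Measure.AbsolutelyContinuous.mk fun A hA hμA => ?_
  rw [Measure.bind_apply hA κ.aemeasurable] at hμA ⊢
  have hnull : ∀ᵐ x ∂μ, κ x A = 0 := (lintegral_eq_zero_iff (κ.measurable_coe hA)).mp hμA
  simp only [hκ.apply_eq_zero_of_ae_eq_zero μ hA hnull, lintegral_zero]

end ProbabilityTheory.Kernel

theorem strongFeller_irreducible_regular_general
    {H : Type*} [TopologicalSpace H] [MeasurableSpace H]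
    (P : ℝ → ℝ → Kernel H H) [∀ s t, IsMarkovKernel (P s t)]
    (hCK : ∀ s r t : ℝ, s ≤ r → r ≤ t → ∀ x : H,
      P s t x = (P s r x).bind ⇑(P r t))
    (hSF : ∀ s t : ℝ, s < t → ∀ f : H → ℝ, Measurable f → (∃ C : ℝ, ∀ x, |f x| ≤ C) →
      Continuous fun x => ∫ y, f y ∂(P s t x))
    (hIrr : ∀ s t : ℝ, s < t → ∀ x : H, ∀ O : Set H, IsOpen O → O.Nonempty →
      0 < P s t x O) :
    ∀ s t : ℝ, s < t → ∀ x y : H,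
      P s t x ≪ P s t y ∧ P s t y ≪ P s t x := by
  intro s t hst x y
  obtain ⟨r, hsr, hrt⟩ := exists_between hst
  have hpos : ∀ z, (P s r z).IsOpenPosMeasure := fun z =>
    ⟨fun O hO hne => (hIrr s r hsr z O hO hne).ne'⟩
  have hfeller : (P r t).IsStrongFeller := hSF r t hrt
  simp only [hCK s r t hsr.le hrt.le]
  exact ⟨hfeller.bind_absolutelyContinuous _ _, hfeller.bind_absolutelyContinuous _ _⟩

/-- Proposition 4.1: a two-parameter family of Markov kernels satisfying the
Chapman–Kolmogorov property which is strong Feller and irreducible is regular,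
i.e. all transition probabilities from a fixed pair of times are mutually
absolutely continuous. -/
theorem strongFeller_irreducible_regular
    {H : Type*} [TopologicalSpace H] [TopologicalSpace.MetrizableSpace H]
    [MeasurableSpace H] [BorelSpace H]
    (P : ℝ → ℝ → Kernel H H) [∀ s t, IsMarkovKernel (P s t)]
    (hCK : ∀ s r t : ℝ, s ≤ r → r ≤ t → ∀ x : H,
      P s t x = (P s r x).bind ⇑(P r t))
    (hSF : ∀ s t : ℝ, s < t → ∀ f : H → ℝ, Measurable f → (∃ C : ℝ, ∀ x, |f x| ≤ C) →
      Continuous fun x => ∫ y, f y ∂(P s t x))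
    (hIrr : ∀ s t : ℝ, s < t → ∀ x : H, ∀ O : Set H, IsOpen O → O.Nonempty →
      0 < P s t x O) :
    ∀ s t : ℝ, s < t → ∀ x y : H,
      P s t x ≪ P s t y ∧ P s t y ≪ P s t x :=
  strongFeller_irreducible_regular_general P hCK hSF hIrr
end

section
/- Let H be a measurable space and let (P_{s,t})_{s ≤ t, s,t ∈ ℝ} be a two-parameter family of Markov kernels on H satisfying the Chapman–Kolmogorov property which is regular, i.e. for all s < t and all x, y ∈ H the measures P_{s,t}(x) and P_{s,t}(y) are mutually absolutely continuous. Suppose (μ_t)_{t ∈ ℝ} is a family of probability measures on H such that μ_s.bind P_{s,t} = μ_t for all s ≤ t. Then for every s < t and every x ∈ H the measures μ_t and P_{s,t}(x) are mutually absolutely continuous. -/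
/-!
`μ t = μ s.bind (P s t)` is a mixture of the measures `P s t y`, all of which are equivalent to
`P s t x` by regularity, and a nonzero mixture of measures equivalent to a fixed one is
equivalent to it.
-/

open MeasureTheory ProbabilityTheory

namespace MeasureTheory.Measure

variable {α β : Type*} {mα : MeasurableSpace α} {mβ : MeasurableSpace β}
  {μ : Measure α} {κ : Kernel α β} {ν : Measure β}

lemma comp_absolutelyContinuous_of_ae (h : ∀ᵐ a ∂μ, κ a ≪ ν) : κ ∘ₘ μ ≪ ν := by
  have hconst := AbsolutelyContinuous.comp_left (η := Kernel.const α ν) μ h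
  rw [Measure.const_comp] at hconst
  exact hconst.trans smul_absolutelyContinuous

lemma absolutelyContinuous_comp_of_ae [NeZero μ] (h : ∀ᵐ a ∂μ, ν ≪ κ a) : ν ≪ κ ∘ₘ μ := by
  have hconst := AbsolutelyContinuous.comp_left (κ := Kernel.const α ν) μ h
  rw [Measure.const_comp] at hconst
  exact (absolutelyContinuous_smul (measure_univ_ne_zero.mpr (NeZero.ne μ))).trans hconst

end MeasureTheory.Measure

theorem evolutionary_system_equivalent_of_regular_general
    {H : Type*} [MeasurableSpace H]
    (P : ℝ → ℝ → Kernel H H)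
    (hreg : ∀ s t : ℝ, s < t → ∀ x y : H,
      P s t x ≪ P s t y ∧ P s t y ≪ P s t x)
    (μ : ℝ → Measure H) (hμprob : ∀ t, IsProbabilityMeasure (μ t))
    (hμ : ∀ s t : ℝ, s ≤ t → (μ s).bind ⇑(P s t) = μ t) :
    ∀ s t : ℝ, s < t → ∀ x : H,
      μ t ≪ P s t x ∧ P s t x ≪ μ t := by
  intro s t hst x
  rw [← hμ s t hst.le]
  exact ⟨Measure.comp_absolutelyContinuous_of_ae (.of_forall fun y ↦ (hreg s t hst y x).1),
    Measure.absolutelyContinuous_comp_of_ae (.of_forall fun y ↦ (hreg s t hst x y).1)⟩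

/-- Proposition 4.2: an evolutionary system of measures of a regular two-parameter
family of Markov kernels is equivalent to all transition probabilities. -/
theorem evolutionary_system_equivalent_of_regular
    {H : Type*} [MeasurableSpace H]
    (P : ℝ → ℝ → Kernel H H) [∀ s t, IsMarkovKernel (P s t)]
    (hCK : ∀ s r t : ℝ, s ≤ r → r ≤ t → ∀ x : H,
      P s t x = (P s r x).bind ⇑(P r t))
    (hreg : ∀ s t : ℝ, s < t → ∀ x y : H,
      P s t x ≪ P s t y ∧ P s t y ≪ P s t x)
    (μ : ℝ → Measure H) (hμprob : ∀ t, IsProbabilityMeasure (μ t))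
    (hμ : ∀ s t : ℝ, s ≤ t → (μ s).bind ⇑(P s t) = μ t) :
    ∀ s t : ℝ, s < t → ∀ x : H,
      μ t ≪ P s t x ∧ P s t x ≪ μ t :=
  evolutionary_system_equivalent_of_regular_general P hreg μ hμprob hμ
end

section
/- Let H be a standard Borel space and K a measurable space. Let Q be a Markov kernel on H × K and R a Markov kernel on K such that for every (x,h) ∈ H × K the pushforward of Q(x,h) under the second projection equals R(h). Let ν be a Q-invariant probability measure on H × K and let λ = ν.map Prod.snd be its second marginal. Assume: (i) λ is ergodic for R, i.e. every measurable E ⊆ K such that R(h)(E) = 1_E(h) for λ-almost every h satisfies λ(E) = 0 or λ(E) = 1; (ii) for λ-almost every h ∈ K, the measures Q(x,h), x ∈ H, are pairwise mutually absolutely continuous. Then ν is ergodic for Q: every measurable set Γ ⊆ H × K such that Q(z)(Γ) = 1_Γ(z) for ν-almost every z ∈ H × K satisfies ν(Γ) = 0 or ν(Γ) = 1. -/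
/-!
A set `Γ` that is invariant for `Q` almost everywhere coincides `ν`-a.e. with
`{z | Q z Γ ≠ 0}`. Since the measures `Q (x, h)`, `x ∈ H`, have the same null sets, whether
`Q (x, h) Γ` vanishes depends on `h` only, so `Γ` is `ν`-a.e. the cylinder over
`E = {h | Q (x₀, h) Γ ≠ 0}`. Invariance of `ν` transfers the invariance of `Γ` to this cylinder,
and on cylinders `Q` acts through `R`; hence `E` is `R`-invariant and
`ν Γ = (ν.map Prod.snd) E ∈ {0, 1}`.
-/

open MeasureTheory ProbabilityTheory
open scoped ENNReal

namespace ProbabilityTheory.Kernel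

variable {X : Type*} [MeasurableSpace X]

def IsAEInvariantSet (κ : Kernel X X) (μ : Measure X) (s : Set X) : Prop :=
  ∀ᵐ x ∂μ, κ x s = s.indicator 1 x

lemma ae_apply_eq_of_ae_eq_comp {Y : Type*} [MeasurableSpace Y] {κ : Kernel X Y}
    {μ : Measure X} {s t : Set Y} (hst : s =ᵐ[κ ∘ₘ μ] t) : ∀ᵐ x ∂μ, κ x s = κ x t := by
  filter_upwards [Measure.ae_ae_of_ae_comp hst] with x hx
  exact measure_congr hx

variable {κ : Kernel X X} {μ : Measure X} {s t : Set X}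

lemma IsAEInvariantSet.congr (hμ : κ ∘ₘ μ = μ) (hs : κ.IsAEInvariantSet μ s) (hst : s =ᵐ[μ] t) :
    κ.IsAEInvariantSet μ t := by
  have hκst : ∀ᵐ x ∂μ, κ x s = κ x t := ae_apply_eq_of_ae_eq_comp (by rwa [hμ])
  filter_upwards [hs, hκst, indicator_ae_eq_of_ae_eq_set (f := (1 : X → ℝ≥0∞)) hst]
    with x hx hκx hind
  rw [← hκx, hx, hind]

lemma IsAEInvariantSet.ae_mem_iff_apply_ne_zero (hs : κ.IsAEInvariantSet μ s) :
    ∀ᵐ x ∂μ, x ∈ s ↔ κ x s ≠ 0 := by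
  filter_upwards [hs] with x hx
  by_cases hxs : x ∈ s <;> simp [hx, hxs]

variable {H K : Type*} [MeasurableSpace H] [MeasurableSpace K]

lemma IsAEInvariantSet.ae_eq_preimage_snd {Q : Kernel (H × K) (H × K)} {ν : Measure (H × K)}
    {Γ : Set (H × K)} (hΓ : Q.IsAEInvariantSet ν Γ)
    (hfiber : ∀ᵐ h ∂(ν.map Prod.snd), ∀ x y : H, Q (x, h) ≪ Q (y, h)) (x₀ : H) :
    Γ =ᵐ[ν] Prod.snd ⁻¹' {h | Q (x₀, h) Γ ≠ 0} := by
  filter_upwards [hΓ.ae_mem_iff_apply_ne_zero,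
    ae_of_ae_map measurable_snd.aemeasurable hfiber] with z hz hzfiber
  have hnull : Q z Γ = 0 ↔ Q (x₀, z.2) Γ = 0 :=
    ⟨fun h ↦ hzfiber x₀ z.1 h, fun h ↦ hzfiber z.1 x₀ h⟩
  exact propext (hz.trans (not_congr hnull))

lemma IsAEInvariantSet.of_preimage_snd {Q : Kernel (H × K) (H × K)} {R : Kernel K K}
    (hQR : ∀ z : H × K, (Q z).map Prod.snd = R z.2) {ν : Measure (H × K)}
    {E : Set K} (hE : MeasurableSet E) (hinv : Q.IsAEInvariantSet ν (Prod.snd ⁻¹' E)) :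
    R.IsAEInvariantSet (ν.map Prod.snd) E := by
  have hmeas : MeasurableSet {h | R h E = E.indicator 1 h} :=
    measurableSet_eq_fun (R.measurable_coe hE) (measurable_const.indicator hE)
  refine (ae_map_iff measurable_snd.aemeasurable hmeas).mpr ?_
  filter_upwards [hinv] with z hz
  rw [← hQR z, Measure.map_apply measurable_snd hE]
  exact hz

end ProbabilityTheory.Kernel

theorem invariant_measure_ergodic_general
    {H K : Type*} [MeasurableSpace H] [MeasurableSpace K]
    (Q : Kernel (H × K) (H × K))
    (R : Kernel K K)
    (hQR : ∀ z : H × K, (Q z).map Prod.snd = R z.2)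
    (ν : Measure (H × K)) [IsProbabilityMeasure ν]
    (hν : ν.bind ⇑Q = ν)
    (hR_erg : ∀ E : Set K, MeasurableSet E →
      (∀ᵐ h ∂(ν.map Prod.snd), R h E = E.indicator 1 h) →
      (ν.map Prod.snd) E = 0 ∨ (ν.map Prod.snd) E = 1)
    (hfiber : ∀ᵐ h ∂(ν.map Prod.snd), ∀ x y : H,
      Q (x, h) ≪ Q (y, h)) :
    ∀ Γ : Set (H × K), MeasurableSet Γ →
      (∀ᵐ z ∂ν, Q z Γ = Γ.indicator 1 z) →
      ν Γ = 0 ∨ ν Γ = 1 := by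
  intro Γ hΓmeas (hΓ : Q.IsAEInvariantSet ν Γ)
  obtain ⟨x₀, -⟩ := nonempty_of_isProbabilityMeasure ν
  set E : Set K := {h | Q (x₀, h) Γ ≠ 0}
  have hE : MeasurableSet E :=
    ((Q.measurable_coe hΓmeas).comp measurable_prodMk_left (measurableSet_singleton 0)).compl
  have hΓE : Γ =ᵐ[ν] Prod.snd ⁻¹' E := hΓ.ae_eq_preimage_snd hfiber x₀
  have hEinv : R.IsAEInvariantSet (ν.map Prod.snd) E :=
    (hΓ.congr hν hΓE).of_preimage_snd hQR hE
  rw [measure_congr hΓE, ← Measure.map_apply measurable_snd hE]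
  exact hR_erg E hE hEinv

/-- Theorem 4.3 (kernel formulation): if the driving marginal is ergodic and the
fiber transition probabilities are almost surely pairwise equivalent, then every
invariant measure of the enlarged process is ergodic. -/
theorem invariant_measure_ergodic
    {H K : Type*} [MeasurableSpace H] [StandardBorelSpace H] [MeasurableSpace K]
    (Q : Kernel (H × K) (H × K)) [IsMarkovKernel Q]
    (R : Kernel K K) [IsMarkovKernel R]
    (hQR : ∀ z : H × K, (Q z).map Prod.snd = R z.2)
    (ν : Measure (H × K)) [IsProbabilityMeasure ν]
    (hν : ν.bind ⇑Q = ν)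
    (hR_erg : ∀ E : Set K, MeasurableSet E →
      (∀ᵐ h ∂(ν.map Prod.snd), R h E = E.indicator 1 h) →
      (ν.map Prod.snd) E = 0 ∨ (ν.map Prod.snd) E = 1)
    (hfiber : ∀ᵐ h ∂(ν.map Prod.snd), ∀ x y : H,
      Q (x, h) ≪ Q (y, h)) :
    ∀ Γ : Set (H × K), MeasurableSet Γ →
      (∀ᵐ z ∂ν, Q z Γ = Γ.indicator 1 z) →
      ν Γ = 0 ∨ ν Γ = 1 :=
  invariant_measure_ergodic_general Q R hQR ν hν hR_erg hfiber
end

section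
/- Let K and H be measurable spaces, let λ be a probability measure on K, and let κ¹ and κ² be Markov kernels from K to H. Let ν¹ and ν² be the probability measures on K × H given by νⁱ(A) = ∫_K κⁱ(h)({x ∈ H : (h,x) ∈ A}) dλ(h) (i.e. νⁱ = λ ⊗ₘ κⁱ, the composition product). If ν¹ and ν² are mutually singular, then for λ-almost every h ∈ K the measures κ¹(h) and κ²(h) are mutually singular. -/
open MeasureTheory ProbabilityTheory

/-- Lemma 5.5: if the composition products `λ ⊗ₘ κ¹` and `λ ⊗ₘ κ²` of a probability
measure `λ` with two Markov kernels are mutually singular, then the kernels are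
`λ`-almost surely mutually singular. -/
theorem fibers_mutually_singular
    {K H : Type*} [MeasurableSpace K] [MeasurableSpace H]
    (lam : Measure K) [IsProbabilityMeasure lam]
    (κ₁ κ₂ : Kernel K H) [IsMarkovKernel κ₁] [IsMarkovKernel κ₂]
    (hsing : (lam ⊗ₘ κ₁) ⟂ₘ (lam ⊗ₘ κ₂)) :
    ∀ᵐ h ∂lam, κ₁ h ⟂ₘ κ₂ h :=
  Measure.mutuallySingular_of_mutuallySingular_compProd hsing .rfl .rfl
end

section
/- Let (Ω, ℱ, P) be a probability space with a filtration (ℱ_k)_{k ∈ ℕ} and let (V_k)_{k ∈ ℕ} be a nonnegative integrable real-valued process adapted to (ℱ_k). Assume there are constants γ ∈ (0,1) and c ≥ 0 such that for every k ∈ ℕ, E[V_{k+1} | ℱ_k] ≤ γ V_k + c almost surely. For M > 0 set τ_M = inf{k ∈ ℕ : V_k ≤ M} (with inf ∅ = ∞). Then there exist M₀ > 0 and a constant C > 0, depending only on γ and c, such that for every M ≥ M₀ and every k ∈ ℕ: P(τ_M ≥ k) ≤ C γ^{k/2} (1 + E[V_0]). -/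
/-!
Let `S_k = {τ_M ≥ k}` and `a_k = ∫_{S_k} V_k`. Since `S_{k+1} ∈ ℱ_k`, the drift condition gives
`a_{k+1} ≤ ∫_{S_{k+1}} (γ V_k + c)`, and on `S_{k+1}` we have `V_k > M`, so for `M ≥ c / (√γ - γ)`
the constant is absorbed: `γ V_k + c ≤ √γ V_k`. Hence `a_k ≤ √γ ^ k E[V_0]`, and Markov's
inequality on `S_{k+1}` gives `P(S_{k+1}) ≤ a_k / M`.
-/

open MeasureTheory ProbabilityTheory

namespace ReturnTime

variable {Ω : Type*} {m : MeasurableSpace Ω} {μ : Measure Ω} {ℱ : Filtration ℕ m}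
  {V : ℕ → Ω → ℝ} {M : ℝ}

/-- The event `{τ_M ≥ k}`, where `τ_M` is the first time `k` with `V k ≤ M`. -/
def stayAbove (V : ℕ → Ω → ℝ) (M : ℝ) (k : ℕ) : Set Ω := {ω | ∀ j < k, M < V j ω}

@[simp]
lemma stayAbove_zero : stayAbove V M 0 = Set.univ := by
  simp [stayAbove]

lemma stayAbove_succ_subset (k : ℕ) : stayAbove V M (k + 1) ⊆ stayAbove V M k :=
  fun _ hω j hj => hω j (Nat.lt_succ_of_lt hj)

lemma lt_of_mem_stayAbove_succ {k : ℕ} {ω : Ω} (hω : ω ∈ stayAbove V M (k + 1)) : M < V k ω :=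
  hω k (Nat.lt_succ_self k)

lemma measurableSet_stayAbove_succ (hV : Adapted ℱ V) (k : ℕ) :
    MeasurableSet[ℱ k] (stayAbove V M (k + 1)) := by
  simp only [stayAbove, Set.ofPred_forall]
  exact .iInter fun j => .iInter fun hj =>
    measurableSet_lt measurable_const ((hV j).mono (ℱ.mono (Nat.lt_succ_iff.mp hj)) le_rfl)

lemma setIntegral_stayAbove_succ_le_of_nonneg {f : Ω → ℝ} (hf : Integrable f μ) (hf0 : 0 ≤ f)
    (k : ℕ) : ∫ ω in stayAbove V M (k + 1), f ω ∂μ ≤ ∫ ω in stayAbove V M k, f ω ∂μ :=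
  setIntegral_mono_set hf.integrableOn (.of_forall hf0) (.of_forall (stayAbove_succ_subset k))

section Finite

variable [IsFiniteMeasure μ]

lemma setIntegral_stayAbove_succ_le (hV_nonneg : ∀ k, 0 ≤ V k)
    (hV_int : ∀ k, Integrable (V k) μ) (hV_adapted : Adapted ℱ V) {γ c ρ : ℝ} (hρ : 0 ≤ ρ)
    (hγρ : γ ≤ ρ) (hcM : c ≤ (ρ - γ) * M) {k : ℕ}
    (hdrift : μ[V (k + 1) | ℱ k] ≤ᵐ[μ] fun ω => γ * V k ω + c) :
    ∫ ω in stayAbove V M (k + 1), V (k + 1) ω ∂μ ≤ ρ * ∫ ω in stayAbove V M k, V k ω ∂μ := by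
  set S := stayAbove V M (k + 1)
  have hS : MeasurableSet[ℱ k] S := measurableSet_stayAbove_succ hV_adapted k
  have h_int : Integrable (fun ω => γ * V k ω + c) μ :=
    ((hV_int k).const_mul γ).add (integrable_const c)
  calc ∫ ω in S, V (k + 1) ω ∂μ = ∫ ω in S, (μ[V (k + 1) | ℱ k]) ω ∂μ :=
        (setIntegral_condExp (ℱ.le k) (hV_int (k + 1)) hS).symm
    _ ≤ ∫ ω in S, (γ * V k ω + c) ∂μ :=
        setIntegral_mono_ae integrable_condExp.integrableOn h_int.integrableOn hdrift
    _ ≤ ∫ ω in S, ρ * V k ω ∂μ := by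
        refine setIntegral_mono_on h_int.integrableOn ((hV_int k).const_mul ρ).integrableOn
          (ℱ.le k _ hS) fun ω hω => ?_
        nlinarith [mul_le_mul_of_nonneg_left (lt_of_mem_stayAbove_succ hω).le (sub_nonneg.2 hγρ)]
    _ = ρ * ∫ ω in S, V k ω ∂μ := integral_const_mul ρ _
    _ ≤ ρ * ∫ ω in stayAbove V M k, V k ω ∂μ :=
        mul_le_mul_of_nonneg_left
          (setIntegral_stayAbove_succ_le_of_nonneg (hV_int k) (hV_nonneg k) k) hρ

lemma setIntegral_stayAbove_le_pow (hV_nonneg : ∀ k, 0 ≤ V k)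
    (hV_int : ∀ k, Integrable (V k) μ) (hV_adapted : Adapted ℱ V) {γ c ρ : ℝ} (hρ : 0 ≤ ρ)
    (hγρ : γ ≤ ρ) (hcM : c ≤ (ρ - γ) * M)
    (hdrift : ∀ k, μ[V (k + 1) | ℱ k] ≤ᵐ[μ] fun ω => γ * V k ω + c) (k : ℕ) :
    ∫ ω in stayAbove V M k, V k ω ∂μ ≤ ρ ^ k * ∫ ω, V 0 ω ∂μ := by
  induction k with
  | zero => simp
  | succ k ih =>
    calc ∫ ω in stayAbove V M (k + 1), V (k + 1) ω ∂μ
        ≤ ρ * ∫ ω in stayAbove V M k, V k ω ∂μ :=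
          setIntegral_stayAbove_succ_le hV_nonneg hV_int hV_adapted hρ hγρ hcM (hdrift k)
      _ ≤ ρ * (ρ ^ k * ∫ ω, V 0 ω ∂μ) := by gcongr
      _ = ρ ^ (k + 1) * ∫ ω, V 0 ω ∂μ := by ring

lemma measureReal_stayAbove_succ_le (hV_nonneg : ∀ k, 0 ≤ V k)
    (hV_int : ∀ k, Integrable (V k) μ) (hV_adapted : Adapted ℱ V) (hM : 0 < M) (k : ℕ) :
    μ.real (stayAbove V M (k + 1)) ≤ (∫ ω in stayAbove V M k, V k ω ∂μ) / M := by
  rw [le_div_iff₀ hM, mul_comm]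
  calc M * μ.real (stayAbove V M (k + 1)) ≤ ∫ ω in stayAbove V M (k + 1), V k ω ∂μ :=
        setIntegral_ge_of_const_le_real (ℱ.le k _ (measurableSet_stayAbove_succ hV_adapted k))
          (measure_ne_top _ _) (fun _ hω => (lt_of_mem_stayAbove_succ hω).le)
          (hV_int k).integrableOn
    _ ≤ ∫ ω in stayAbove V M k, V k ω ∂μ :=
        setIntegral_stayAbove_succ_le_of_nonneg (hV_int k) (hV_nonneg k) k

end Finite

lemma measureReal_stayAbove_le [IsProbabilityMeasure μ] (hV_nonneg : ∀ k, 0 ≤ V k)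
    (hV_int : ∀ k, Integrable (V k) μ) (hV_adapted : Adapted ℱ V) {γ c ρ : ℝ} (hρ0 : 0 < ρ)
    (hρ1 : ρ ≤ 1) (hγρ : γ ≤ ρ) (hM : 1 ≤ M) (hcM : c ≤ (ρ - γ) * M)
    (hdrift : ∀ k, μ[V (k + 1) | ℱ k] ≤ᵐ[μ] fun ω => γ * V k ω + c) (k : ℕ) :
    μ.real (stayAbove V M k) ≤ ρ⁻¹ * ρ ^ k * (1 + ∫ ω, V 0 ω ∂μ) := by
  have hE : 0 ≤ ∫ ω, V 0 ω ∂μ := integral_nonneg (hV_nonneg 0)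
  have hρinv : 1 ≤ ρ⁻¹ := one_le_inv₀ hρ0 |>.2 hρ1
  cases k with
  | zero =>
    simp only [stayAbove_zero, probReal_univ, pow_zero, mul_one]
    nlinarith
  | succ k =>
    have ha0 : 0 ≤ ∫ ω in stayAbove V M k, V k ω ∂μ :=
      setIntegral_nonneg_of_ae (.of_forall (hV_nonneg k))
    calc μ.real (stayAbove V M (k + 1)) ≤ (∫ ω in stayAbove V M k, V k ω ∂μ) / M :=
          measureReal_stayAbove_succ_le hV_nonneg hV_int hV_adapted (by linarith) k
      _ ≤ ∫ ω in stayAbove V M k, V k ω ∂μ := div_le_self ha0 hM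
      _ ≤ ρ ^ k * ∫ ω, V 0 ω ∂μ :=
          setIntegral_stayAbove_le_pow hV_nonneg hV_int hV_adapted hρ0.le hγρ hcM hdrift k
      _ ≤ ρ⁻¹ * ρ ^ (k + 1) * (1 + ∫ ω, V 0 ω ∂μ) := by
          rw [pow_succ', ← mul_assoc, inv_mul_cancel₀ hρ0.ne', one_mul]
          gcongr
          linarith

end ReturnTime

open ReturnTime

theorem return_time_tail_estimate_general
    {Ω : Type*} {m : MeasurableSpace Ω} {μ : Measure Ω} [IsProbabilityMeasure μ]
    (ℱ : Filtration ℕ m) (V : ℕ → Ω → ℝ)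
    (hV_nonneg : ∀ k ω, 0 ≤ V k ω)
    (hV_int : ∀ k, Integrable (V k) μ)
    (hV_adapted : Adapted ℱ V)
    (γ c : ℝ) (hγ : γ ∈ Set.Ioo (0 : ℝ) 1)
    (hdrift : ∀ k, μ[V (k + 1) | ℱ k] ≤ᵐ[μ] fun ω => γ * V k ω + c) :
    ∃ M₀ > (0 : ℝ), ∃ C > (0 : ℝ), ∀ M ≥ M₀, ∀ k : ℕ,
      (μ {ω | ∀ j < k, M < V j ω}).toReal ≤
        C * γ ^ ((k : ℝ) / 2) * (1 + ∫ ω, V 0 ω ∂μ) := by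
  obtain ⟨hγ0, hγ1⟩ := hγ
  have hρ0 : 0 < √γ := Real.sqrt_pos.2 hγ0
  have hρ1 : √γ ≤ 1 := Real.sqrt_le_one.2 hγ1.le
  have hγρ : γ < √γ := Real.lt_sqrt_self_iff.2 ⟨hγ0.ne', hγ1⟩
  refine ⟨max 1 (c / (√γ - γ)), by positivity, (√γ)⁻¹, inv_pos.2 hρ0, fun M hM k => ?_⟩
  have hcM : c ≤ (√γ - γ) * M := by
    rw [mul_comm, ← div_le_iff₀ (sub_pos.2 hγρ)]
    exact (le_max_right _ _).trans hM
  rw [Real.rpow_div_two_eq_sqrt _ hγ0.le, Real.rpow_natCast]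
  exact measureReal_stayAbove_le hV_nonneg hV_int hV_adapted hρ0 hρ1 hγρ.le
    ((le_max_left _ _).trans hM) hcM hdrift k

/-- Lemma 6.1, polynomial estimate (6.3): under a geometric Lyapunov drift condition,
the return time `τ_M = inf{k : V_k ≤ M}` to a sufficiently large sublevel set has
exponentially decaying tails: `P(τ_M ≥ k) ≤ C γ^{k/2} (1 + E[V₀])`.  The event
`{τ_M ≥ k}` is written as `{ω | ∀ j < k, M < V j ω}`. -/
theorem return_time_tail_estimate
    {Ω : Type*} {m : MeasurableSpace Ω} {μ : Measure Ω} [IsProbabilityMeasure μ]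
    (ℱ : Filtration ℕ m) (V : ℕ → Ω → ℝ)
    (hV_nonneg : ∀ k ω, 0 ≤ V k ω)
    (hV_int : ∀ k, Integrable (V k) μ)
    (hV_adapted : Adapted ℱ V)
    (γ c : ℝ) (hγ : γ ∈ Set.Ioo (0 : ℝ) 1) (hc : 0 ≤ c)
    (hdrift : ∀ k, μ[V (k + 1) | ℱ k] ≤ᵐ[μ] fun ω => γ * V k ω + c) :
    ∃ M₀ > (0 : ℝ), ∃ C > (0 : ℝ), ∀ M ≥ M₀, ∀ k : ℕ,
      (μ {ω | ∀ j < k, M < V j ω}).toReal ≤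
        C * γ ^ ((k : ℝ) / 2) * (1 + ∫ ω, V 0 ω ∂μ) :=
  return_time_tail_estimate_general ℱ V hV_nonneg hV_int hV_adapted γ c hγ hdrift
end

section
/- Let (Ω, ℱ, P) be a probability space with a filtration (ℱ_k)_{k ∈ ℕ} and let (V_k)_{k ∈ ℕ} be a nonnegative integrable real-valued process adapted to (ℱ_k) such that for constants γ ∈ (0,1) and c ≥ 0 one has E[V_{k+1} | ℱ_k] ≤ γ V_k + c almost surely for every k. For M > 0 set τ_M = inf{k ∈ ℕ : V_k ≤ M}. Then for every α > 0 with e^{2α} γ < 1 there exist M₀ > 0 and a constant C(α) > 0, depending only on α, γ and c, such that for every M ≥ M₀: τ_M < ∞ almost surely and E[e^{α τ_M}] ≤ C(α) (1 + E[V_0]). -/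
/-!
Let `A_n = {V_j > M for all j < n} = {τ_M ≥ n}`, which is `ℱ_{n-1}`-measurable. Integrating the
drift inequality over `A_{k+1}` and using `V_k > M` there, so that `c P(A_{k+1}) ≤ (c/M) E[V_k; A_k]`,
gives `E[V_{k+1}; A_{k+1}] ≤ (γ + c/M) E[V_k; A_k]`. Hence `P(τ_M > k) ≤ (γ + c/M)^k E[V_0] / M`,
and once `M` is so large that `γ + c/M ≤ e^{-2α}`, summing `e^{α n} P(τ_M = n)` is a convergent
geometric series with ratio `e^{-α}`.
-/

open MeasureTheory ProbabilityTheory Filter Topology Real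

theorem measurable_sInf_setOf {α : Type*} [MeasurableSpace α] {p : α → ℕ → Prop}
    (hp : ∀ k, MeasurableSet {x | p x k}) : Measurable fun x => sInf {k | p x k} := by
  classical
  -- `sInf ∅ = 0` in `ℕ`, so the infimum is the first `k` with `p x k ∨ ∀ j, ¬ p x j`.
  have h_exists : ∀ x, ∃ k, p x k ∨ ∀ j, ¬ p x j := fun x =>
    (em (∃ j, p x j)).elim (fun ⟨j, hj⟩ => ⟨j, .inl hj⟩) fun h => ⟨0, .inr (not_exists.mp h)⟩
  have h_eq : (fun x => sInf {k | p x k}) = fun x => Nat.find (h_exists x) := by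
    funext x
    by_cases hx : ∃ j, p x j
    · exact (Nat.sInf_def hx).trans (Nat.find_congr' (or_iff_left (not_forall_not.mpr hx)).symm)
    · push Not at hx
      rw [(Nat.find_eq_zero _).mpr (.inr hx)]
      exact Nat.sInf_eq_zero.mpr (.inr (Set.eq_empty_of_forall_notMem hx))
  rw [h_eq]
  refine measurable_find h_exists fun k => ?_
  simp only [Set.ofPred_or, Set.ofPred_forall]
  exact (hp k).union (.iInter fun j => (hp j).compl)

theorem integral_exp_mul_le_of_measureReal_preimage_succ_le {Ω : Type*} {m : MeasurableSpace Ω}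
    {μ : Measure Ω} [IsProbabilityMeasure μ] {τ : Ω → ℕ} (hτ : Measurable τ) {α r C : ℝ}
    (hr : 0 ≤ r) (hαr : exp α * r < 1) (hτ_succ : ∀ k, μ.real (τ ⁻¹' {k + 1}) ≤ C * r ^ k) :
    ∫ ω, exp (α * τ ω) ∂μ ≤ 1 + C * exp α / (1 - exp α * r) := by
  have hC : 0 ≤ C := by simpa using measureReal_nonneg.trans (hτ_succ 0)
  have hq : 0 ≤ exp α * r := by positivity
  have h_term : ∀ k : ℕ, ENNReal.ofReal (exp (α * (k + 1 : ℕ))) * μ (τ ⁻¹' {k + 1}) ≤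
      ENNReal.ofReal (C * exp α * (exp α * r) ^ k) := by
    intro k
    rw [← ofReal_measureReal, ← ENNReal.ofReal_mul (by positivity)]
    refine ENNReal.ofReal_le_ofReal ?_
    calc exp (α * (k + 1 : ℕ)) * μ.real (τ ⁻¹' {k + 1})
        ≤ exp (α * (k + 1 : ℕ)) * (C * r ^ k) := by gcongr; exact hτ_succ k
      _ = C * exp α * (exp α * r) ^ k := by
        rw [mul_pow, ← exp_nat_mul]; push_cast; rw [mul_add_one, exp_add]; ring_nf
  have h_lintegral : ∫⁻ ω, ENNReal.ofReal (exp (α * τ ω)) ∂μ ≤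
      ENNReal.ofReal (1 + C * exp α / (1 - exp α * r)) := by
    rw [← lintegral_map (f := fun n : ℕ => ENNReal.ofReal (exp (α * n))) measurable_from_nat hτ,
      lintegral_countable', tsum_eq_zero_add' ENNReal.summable]
    simp only [Measure.map_apply hτ (measurableSet_singleton _)]
    calc _ ≤ 1 + ∑' k : ℕ, ENNReal.ofReal (C * exp α * (exp α * r) ^ k) := by
          gcongr ?_ + ?_
          · simpa using prob_le_one
          · exact ENNReal.tsum_le_tsum h_term
      _ = ENNReal.ofReal (1 + C * exp α / (1 - exp α * r)) := by
        rw [← ENNReal.ofReal_tsum_of_nonneg (fun k => by positivity)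
            ((summable_geometric_of_lt_one hq hαr).mul_left _), tsum_mul_left,
          tsum_geometric_of_lt_one hq hαr, ← ENNReal.ofReal_one,
          ← ENNReal.ofReal_add zero_le_one (by have := sub_pos.mpr hαr; positivity)]
        ring_nf
  calc ∫ ω, exp (α * τ ω) ∂μ ≤ ‖∫ ω, exp (α * τ ω) ∂μ‖ := le_norm_self _
    _ ≤ (∫⁻ ω, ENNReal.ofReal ‖exp (α * τ ω)‖ ∂μ).toReal := norm_integral_le_lintegral_norm _
    _ ≤ 1 + C * exp α / (1 - exp α * r) := by
      simp only [norm_of_nonneg (exp_pos _).le]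
      exact ENNReal.toReal_le_of_le_ofReal (by have := sub_pos.mpr hαr; positivity) h_lintegral

namespace MeasureTheory

variable {Ω : Type*} {m : MeasurableSpace Ω} {μ : Measure Ω}

/-- The event `{τ_M ≥ n}` for the first time `τ_M` at which `V` is at most `M`. -/
def staysAbove (V : ℕ → Ω → ℝ) (M : ℝ) (n : ℕ) : Set Ω := {ω | ∀ j < n, M < V j ω}

section staysAbove

variable {V : ℕ → Ω → ℝ} {M : ℝ}

@[simp]
theorem staysAbove_zero : staysAbove V M 0 = Set.univ := by
  simp [staysAbove]

theorem staysAbove_antitone : Antitone (staysAbove V M) :=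
  fun _ _ hnk _ hω j hj => hω j (hj.trans_le hnk)

theorem Adapted.measurableSet_staysAbove {ℱ : Filtration ℕ m} (hV : Adapted ℱ V) {n k : ℕ}
    (hnk : n ≤ k + 1) : MeasurableSet[ℱ k] (staysAbove V M n) := by
  simp only [staysAbove, Set.ofPred_forall]
  exact .iInter fun j => .iInter fun hj =>
    measurableSet_lt measurable_const (hV.measurable_le (by omega))

theorem preimage_sInf_setOf_le_subset_staysAbove (n : ℕ) :
    (fun ω => sInf {k | V k ω ≤ M}) ⁻¹' {n} ⊆ staysAbove V M n := by
  intro ω (hω : sInf {k | V k ω ≤ M} = n) j hj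
  rw [← hω] at hj
  simpa using Nat.notMem_of_lt_sInf hj

theorem setIntegral_staysAbove_le_of_le {f : Ω → ℝ} (hf_nonneg : 0 ≤ f) (hf : Integrable f μ)
    {n n' : ℕ} (hnn' : n ≤ n') :
    ∫ ω in staysAbove V M n', f ω ∂μ ≤ ∫ ω in staysAbove V M n, f ω ∂μ :=
  setIntegral_mono_set hf.integrableOn (ae_of_all _ hf_nonneg)
    (ae_of_all _ (staysAbove_antitone hnn'))

end staysAbove

structure IsGeometricDrift (μ : Measure Ω) (ℱ : Filtration ℕ m) (V : ℕ → Ω → ℝ) (γ c : ℝ) :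
    Prop where
  nonneg : ∀ k ω, 0 ≤ V k ω
  integrable : ∀ k, Integrable (V k) μ
  adapted : Adapted ℱ V
  condExp_le : ∀ k, μ[V (k + 1) | ℱ k] ≤ᵐ[μ] fun ω => γ * V k ω + c

section Drift

variable [IsFiniteMeasure μ] {ℱ : Filtration ℕ m} {V : ℕ → Ω → ℝ} {γ c M : ℝ}

theorem mul_measureReal_staysAbove_succ_le (hV_nonneg : ∀ k ω, 0 ≤ V k ω)
    (hV_int : ∀ k, Integrable (V k) μ) (hV_adapted : Adapted ℱ V) (k : ℕ) :
    M * μ.real (staysAbove V M (k + 1)) ≤ ∫ ω in staysAbove V M k, V k ω ∂μ := by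
  have h_meas : MeasurableSet (staysAbove V M (k + 1)) :=
    ℱ.le (k + 1) _ (hV_adapted.measurableSet_staysAbove le_self_add)
  calc M * μ.real (staysAbove V M (k + 1))
      ≤ ∫ ω in staysAbove V M (k + 1), V k ω ∂μ :=
        setIntegral_ge_of_const_le_real h_meas (measure_ne_top μ _)
          (fun ω hω => (hω k k.lt_succ_self).le) (hV_int k).integrableOn
    _ ≤ ∫ ω in staysAbove V M k, V k ω ∂μ :=
        setIntegral_staysAbove_le_of_le (hV_nonneg k) (hV_int k) k.le_succ

namespace IsGeometricDrift

theorem setIntegral_staysAbove_succ_le (hV : IsGeometricDrift μ ℱ V γ c) (hγ : 0 ≤ γ)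
    (hc : 0 ≤ c) (hM : 0 < M) (k : ℕ) :
    ∫ ω in staysAbove V M (k + 1), V (k + 1) ω ∂μ ≤
      (γ + c / M) * ∫ ω in staysAbove V M k, V k ω ∂μ := by
  set A := staysAbove V M (k + 1)
  have hA : MeasurableSet[ℱ k] A := hV.adapted.measurableSet_staysAbove le_rfl
  have h_mass : c * μ.real A ≤ c / M * ∫ ω in staysAbove V M k, V k ω ∂μ := by
    calc c * μ.real A = c / M * (M * μ.real A) := by field_simp
      _ ≤ _ := by
        gcongr
        exact mul_measureReal_staysAbove_succ_le hV.nonneg hV.integrable hV.adapted k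
  calc ∫ ω in A, V (k + 1) ω ∂μ = ∫ ω in A, (μ[V (k + 1) | ℱ k]) ω ∂μ :=
        (setIntegral_condExp (ℱ.le k) (hV.integrable (k + 1)) hA).symm
    _ ≤ ∫ ω in A, (γ * V k ω + c) ∂μ :=
        setIntegral_mono_ae integrable_condExp.integrableOn
          (((hV.integrable k).const_mul γ).add (integrable_const c)).integrableOn
          (hV.condExp_le k)
    _ = γ * ∫ ω in A, V k ω ∂μ + c * μ.real A := by
        rw [integral_add ((hV.integrable k).const_mul γ).integrableOn integrableOn_const,
          integral_const_mul, setIntegral_const, smul_eq_mul, mul_comm (μ.real A)]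
    _ ≤ γ * ∫ ω in staysAbove V M k, V k ω ∂μ + c / M * ∫ ω in staysAbove V M k, V k ω ∂μ := by
        grw [setIntegral_staysAbove_le_of_le (hV.nonneg k) (hV.integrable k) k.le_succ, h_mass]
    _ = (γ + c / M) * ∫ ω in staysAbove V M k, V k ω ∂μ := by ring

theorem setIntegral_staysAbove_le_pow (hV : IsGeometricDrift μ ℱ V γ c) (hγ : 0 ≤ γ)
    (hc : 0 ≤ c) (hM : 0 < M) (k : ℕ) :
    ∫ ω in staysAbove V M k, V k ω ∂μ ≤ (γ + c / M) ^ k * ∫ ω, V 0 ω ∂μ := by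
  induction k with
  | zero => simp
  | succ k ih =>
    calc ∫ ω in staysAbove V M (k + 1), V (k + 1) ω ∂μ
        ≤ (γ + c / M) * ∫ ω in staysAbove V M k, V k ω ∂μ :=
          hV.setIntegral_staysAbove_succ_le hγ hc hM k
      _ ≤ (γ + c / M) * ((γ + c / M) ^ k * ∫ ω, V 0 ω ∂μ) := by gcongr
      _ = (γ + c / M) ^ (k + 1) * ∫ ω, V 0 ω ∂μ := by ring

theorem mul_measureReal_staysAbove_succ_le_pow (hV : IsGeometricDrift μ ℱ V γ c) (hγ : 0 ≤ γ)
    (hc : 0 ≤ c) (hM : 0 < M) (k : ℕ) :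
    M * μ.real (staysAbove V M (k + 1)) ≤ (γ + c / M) ^ k * ∫ ω, V 0 ω ∂μ :=
  (mul_measureReal_staysAbove_succ_le hV.nonneg hV.integrable hV.adapted k).trans
    (hV.setIntegral_staysAbove_le_pow hγ hc hM k)

theorem ae_exists_le (hV : IsGeometricDrift μ ℱ V γ c) (hγ : 0 ≤ γ) (hc : 0 ≤ c) (hM : 0 < M)
    (hγcM : γ + c / M < 1) :
    ∀ᵐ ω ∂μ, ∃ k, V k ω ≤ M := by
  rw [ae_iff]
  simp only [not_exists, not_le]
  have h_tendsto : Tendsto (fun k => (γ + c / M) ^ k * (∫ ω, V 0 ω ∂μ) / M) atTop (𝓝 0) := by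
    simpa using ((tendsto_pow_atTop_nhds_zero_of_lt_one (by positivity) hγcM).mul_const
      (∫ ω, V 0 ω ∂μ)).div_const M
  refine (measureReal_eq_zero_iff).mp (le_antisymm (ge_of_tendsto h_tendsto
    (.of_forall fun k => ?_)) measureReal_nonneg)
  rw [le_div_iff₀ hM, mul_comm]
  calc M * μ.real {ω | ∀ k, M < V k ω} ≤ M * μ.real (staysAbove V M (k + 1)) :=
        mul_le_mul_of_nonneg_left (measureReal_mono fun ω hω j _ => hω j) hM.le
    _ ≤ _ := hV.mul_measureReal_staysAbove_succ_le_pow hγ hc hM k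

end IsGeometricDrift

end Drift

theorem IsGeometricDrift.integral_exp_mul_sInf_le [IsProbabilityMeasure μ]
    {ℱ : Filtration ℕ m} {V : ℕ → Ω → ℝ} {γ c M : ℝ} (hV : IsGeometricDrift μ ℱ V γ c)
    (hγ : 0 ≤ γ) (hc : 0 ≤ c) (hM : 1 ≤ M) {α ρ : ℝ} (hγcM : γ + c / M ≤ ρ)
    (hαρ : exp α * ρ < 1) :
    ∫ ω, exp (α * (sInf {k | V k ω ≤ M} : ℕ)) ∂μ ≤
      1 + (∫ ω, V 0 ω ∂μ) * exp α / (1 - exp α * ρ) := by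
  have hM0 : 0 < M := one_pos.trans_le hM
  have hτ : Measurable fun ω => sInf {k | V k ω ≤ M} :=
    measurable_sInf_setOf fun k => measurableSet_le hV.adapted.measurable measurable_const
  refine integral_exp_mul_le_of_measureReal_preimage_succ_le hτ
    ((by positivity : 0 ≤ γ + c / M).trans hγcM) hαρ fun k => ?_
  calc _ ≤ μ.real (staysAbove V M (k + 1)) :=
        measureReal_mono (preimage_sInf_setOf_le_subset_staysAbove _)
    _ ≤ M * μ.real (staysAbove V M (k + 1)) := le_mul_of_one_le_left measureReal_nonneg hM
    _ ≤ (γ + c / M) ^ k * ∫ ω, V 0 ω ∂μ := hV.mul_measureReal_staysAbove_succ_le_pow hγ hc hM0 k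
    _ ≤ (∫ ω, V 0 ω ∂μ) * ρ ^ k := by
        rw [mul_comm]
        gcongr
        exact integral_nonneg (hV.nonneg 0)

end MeasureTheory

/-- Lemma 6.1, exponential-moment estimate (6.4): under a geometric Lyapunov drift
condition, for every `α > 0` with `e^{2α} γ < 1` and every sufficiently large `M`,
the return time `τ_M = inf{k : V_k ≤ M}` is almost surely finite and satisfies
`E[e^{α τ_M}] ≤ C(α) (1 + E[V₀])`. -/
theorem return_time_exponential_moment
    {Ω : Type*} {m : MeasurableSpace Ω} {μ : Measure Ω} [IsProbabilityMeasure μ]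
    (ℱ : Filtration ℕ m) (V : ℕ → Ω → ℝ)
    (hV_nonneg : ∀ k ω, 0 ≤ V k ω)
    (hV_int : ∀ k, Integrable (V k) μ)
    (hV_adapted : Adapted ℱ V)
    (γ c : ℝ) (hγ : γ ∈ Set.Ioo (0 : ℝ) 1) (hc : 0 ≤ c)
    (hdrift : ∀ k, μ[V (k + 1) | ℱ k] ≤ᵐ[μ] fun ω => γ * V k ω + c)
    (α : ℝ) (hα : 0 < α) (hαγ : Real.exp (2 * α) * γ < 1) :
    ∃ M₀ > (0 : ℝ), ∃ C > (0 : ℝ), ∀ M ≥ M₀,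
      (∀ᵐ ω ∂μ, ∃ k : ℕ, V k ω ≤ M) ∧
      ∫ ω, Real.exp (α * (sInf {k : ℕ | V k ω ≤ M} : ℕ)) ∂μ ≤
        C * (1 + ∫ ω, V 0 ω ∂μ) := by
  have hV : IsGeometricDrift μ ℱ V γ c := ⟨hV_nonneg, hV_int, hV_adapted, hdrift⟩
  have hγρ : γ < exp (-(2 * α)) := by rwa [exp_neg, ← one_div, lt_div_iff₀' (exp_pos _)]
  set ρ := exp (-(2 * α))
  have hαρ : exp α * ρ = exp (-α) := by rw [← exp_add]; ring_nf
  have hexp : exp (-α) < 1 := exp_lt_one_iff.mpr (neg_lt_zero.mpr hα)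
  have hK : 0 ≤ exp α / (1 - exp (-α)) := by have := sub_pos.mpr hexp; positivity
  refine ⟨max 1 (c / (ρ - γ)), by positivity, 1 + exp α / (1 - exp (-α)), by positivity,
    fun M hM => ?_⟩
  have hM1 : 1 ≤ M := le_of_max_le_left hM
  have hM0 : 0 < M := one_pos.trans_le hM1
  have hγcM : γ + c / M ≤ ρ := by
    rw [← le_sub_iff_add_le', div_le_iff₀ hM0, ← div_le_iff₀' (sub_pos.mpr hγρ)]
    exact le_of_max_le_right hM
  refine ⟨hV.ae_exists_le hγ.1.le hc hM0 (hγcM.trans_lt (exp_lt_one_iff.mpr (by linarith))), ?_⟩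
  have hE : 0 ≤ ∫ ω, V 0 ω ∂μ := integral_nonneg (hV_nonneg 0)
  calc _ ≤ 1 + (∫ ω, V 0 ω ∂μ) * exp α / (1 - exp α * ρ) :=
        hV.integral_exp_mul_sInf_le hγ.1.le hc hM1 hγcM (hαρ ▸ hexp)
    _ ≤ _ := by
      rw [hαρ, mul_div_assoc]
      nlinarith
end

section
/- Let H be a Polish space with its Borel σ-algebra and let (P_{s,t})_{s ≤ t, s,t ∈ ℝ} be a two-parameter family of Markov kernels on H satisfying the Chapman–Kolmogorov property. Let (μ_t)_{t ∈ ℝ} be a family of probability measures on H such that: (a) for every s ∈ ℝ, the map t ↦ μ_s.bind P_{s,t} from [s,∞) to the space of probability measures on H is continuous for the topology of weak convergence; (b) for Lebesgue-almost every s ∈ ℝ and then Lebesgue-almost every t ≥ s, μ_s.bind P_{s,t} = μ_t. Then there exists a family (μ̃_t)_{t ∈ ℝ} of probability measures on H such that μ̃_t = μ_t for Lebesgue-almost every t ∈ ℝ and μ̃_s.bind P_{s,t} = μ̃_t for ALL s ≤ t. -/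
/-!
Call `s` good if `μ_s P_{s,t} = μ_t` for almost every `t ≥ s`; almost every `s` is good. For good
`a ≤ b`, the two weakly continuous curves `t ↦ μ_a P_{a,t}` and `t ↦ μ_b P_{b,t}` agree with `μ_t`
for almost every `t ≥ b`, hence everywhere on `[b, ∞)`. So `μ̃_t := μ_a P_{a,t}` does not depend on
the good point `a < t`, and Chapman–Kolmogorov turns this independence into `μ̃_s P_{s,t} = μ̃_t`.
-/

open MeasureTheory ProbabilityTheory Filter Set

theorem MeasureTheory.Measure.eqOn_of_ae_eq_of_forall_continuousOn_integral
    {T Ω : Type*} [TopologicalSpace T] [MeasurableSpace T] {m : Measure T} [m.IsOpenPosMeasure]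
    [MeasurableSpace Ω] [TopologicalSpace Ω] [HasOuterApproxClosed Ω] [BorelSpace Ω]
    {ν ν' : T → Measure Ω} [∀ t, IsFiniteMeasure (ν t)] [∀ t, IsFiniteMeasure (ν' t)]
    {s : Set T} (hν : ∀ f : BoundedContinuousFunction Ω ℝ, ContinuousOn (fun t ↦ ∫ x, f x ∂ν t) s)
    (hν' : ∀ f : BoundedContinuousFunction Ω ℝ, ContinuousOn (fun t ↦ ∫ x, f x ∂ν' t) s)
    (h : ν =ᵐ[m.restrict s] ν') (hs : s ⊆ closure (interior s)) : EqOn ν ν' s := fun _ ht ↦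
  ext_of_forall_integral_eq_of_IsFiniteMeasure fun f ↦
    eqOn_of_ae_eq (h.fun_comp fun ρ ↦ ∫ x, f x ∂ρ) (hν f) (hν' f) hs ht

theorem Real.exists_lt_of_ae {p : ℝ → Prop} (h : ∀ᵐ s, p s) (c : ℝ) : ∃ s < c, p s := by
  have : (ae (volume.restrict (Iio c))).NeBot := ae_restrict_neBot.2 (by simp)
  obtain ⟨s, hs, hsc⟩ := ((ae_restrict_of_ae (s := Iio c) h).and (ae_restrict_mem measurableSet_Iio)).exists
  exact ⟨s, hsc, hs⟩

theorem Real.ae_of_forall_exists_ae_restrict_Ici {μ : Measure ℝ} {p : ℝ → Prop}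
    (h : ∀ c, ∃ a ≤ c, ∀ᵐ t ∂μ.restrict (Ici a), p t) : ∀ᵐ t ∂μ, p t := by
  choose a ha hp using fun n : ℕ ↦ h (-n)
  have hcover : ⋃ n : ℕ, Ici (a n) = univ := by
    refine eq_univ_of_forall fun t ↦ mem_iUnion.2 ?_
    obtain ⟨n, hn⟩ := exists_nat_ge (-t)
    exact ⟨n, (ha n).trans (by linarith)⟩
  rw [← Measure.restrict_univ (μ := μ), ← hcover, ae_restrict_iUnion_iff]
  exact hp

section EvolutionarySystem

variable {H : Type*} [MeasurableSpace H] {P : ℝ → ℝ → Kernel H H}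

theorem bind_bind_eq_bind_of_chapmanKolmogorov
    (hCK : ∀ s r t : ℝ, s ≤ r → r ≤ t → ∀ x : H, P s t x = (P s r x).bind ⇑(P r t))
    (ρ : Measure H) {r s t : ℝ} (hrs : r ≤ s) (hst : s ≤ t) :
    (ρ.bind ⇑(P r s)).bind ⇑(P s t) = ρ.bind ⇑(P r t) := by
  rw [Measure.bind_bind (P r s).measurable.aemeasurable (P s t).measurable.aemeasurable]
  congr 1
  funext x
  exact (hCK r s t hrs hst x).symm

variable [TopologicalSpace H] [HasOuterApproxClosed H] [BorelSpace H]
  [∀ s t, IsMarkovKernel (P s t)] {μ : ℝ → Measure H} [∀ t, IsFiniteMeasure (μ t)]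

theorem bind_eq_bind_of_ae_bind_eq
    (hcont : ∀ s : ℝ, ∀ f : BoundedContinuousFunction H ℝ,
      ContinuousOn (fun t ↦ ∫ x, f x ∂((μ s).bind ⇑(P s t))) (Ici s))
    {a b t : ℝ} (ha : ∀ᵐ r ∂volume.restrict (Ici a), (μ a).bind ⇑(P a r) = μ r)
    (hb : ∀ᵐ r ∂volume.restrict (Ici b), (μ b).bind ⇑(P b r) = μ r)
    (hat : a ≤ t) (hbt : b ≤ t) :
    (μ a).bind ⇑(P a t) = (μ b).bind ⇑(P b t) := by
  wlog hab : a ≤ b generalizing a b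
  · exact (this hb ha hbt hat (le_of_not_ge hab)).symm
  have hsub : Ici b ⊆ Ici a := Ici_subset_Ici.2 hab
  refine Measure.eqOn_of_ae_eq_of_forall_continuousOn_integral (m := volume)
    (fun f ↦ (hcont a f).mono hsub) (hcont b) ?_ (by simp) hbt
  filter_upwards [ae_restrict_of_ae_restrict_of_subset hsub ha, hb] with r har hbr
  exact har.trans hbr.symm

end EvolutionarySystem

/-- The modification argument in the proof of Theorem 3.2: if `(μ_t)` satisfies the
evolutionary relation for almost every `s` and then almost every `t ≥ s`, and the
evolved measures depend weakly continuously on `t`, then there is a modification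
`(μ̃_t)`, equal to `(μ_t)` for almost every `t`, which satisfies the evolutionary
relation for ALL `s ≤ t`.  Weak continuity is expressed by testing against all
bounded continuous functions. -/
theorem modification_evolutionary_system
    {H : Type*} [TopologicalSpace H] [PolishSpace H]
    [MeasurableSpace H] [BorelSpace H]
    (P : ℝ → ℝ → Kernel H H) [∀ s t, IsMarkovKernel (P s t)]
    (hCK : ∀ s r t : ℝ, s ≤ r → r ≤ t → ∀ x : H,
      P s t x = (P s r x).bind ⇑(P r t))
    (μ : ℝ → Measure H) (hμprob : ∀ t, IsProbabilityMeasure (μ t))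
    (hcont : ∀ s : ℝ, ∀ f : BoundedContinuousFunction H ℝ,
      ContinuousOn (fun t => ∫ x, f x ∂((μ s).bind ⇑(P s t))) (Set.Ici s))
    (hae : ∀ᵐ s ∂(volume : Measure ℝ),
      ∀ᵐ t ∂((volume : Measure ℝ).restrict (Set.Ici s)),
        (μ s).bind ⇑(P s t) = μ t) :
    ∃ μ' : ℝ → Measure H,
      (∀ t, IsProbabilityMeasure (μ' t)) ∧
      (∀ᵐ t ∂(volume : Measure ℝ), μ' t = μ t) ∧
      (∀ s t : ℝ, s ≤ t → (μ' s).bind ⇑(P s t) = μ' t) := by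
  choose g hg_lt hg_good using Real.exists_lt_of_ae hae
  refine ⟨fun t ↦ (μ (g t)).bind ⇑(P (g t) t), fun t ↦ inferInstance, ?_, fun s t hst ↦ ?_⟩
  · refine Real.ae_of_forall_exists_ae_restrict_Ici fun c ↦ ⟨g c, (hg_lt c).le, ?_⟩
    filter_upwards [hg_good c, ae_restrict_mem measurableSet_Ici] with t ht hct
    exact (bind_eq_bind_of_ae_bind_eq hcont (hg_good t) (hg_good c) (hg_lt t).le hct).trans ht
  · dsimp only
    rw [bind_bind_eq_bind_of_chapmanKolmogorov hCK _ (hg_lt s).le hst]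
    exact bind_eq_bind_of_ae_bind_eq hcont (hg_good s) (hg_good t) ((hg_lt s).le.trans hst)
      (hg_lt t).le
end

section
/- Let H be a real normed space with its Borel σ-algebra, let (P_{s,t})_{s ≤ t, s,t ∈ ℝ} be a two-parameter family of Markov kernels on H, and let (μ_t)_{t ∈ ℝ} be probability measures on H with μ_s.bind P_{s,t} = μ_t for all s ≤ t. Assume there are constants c, γ > 0 such that for every bounded measurable φ : H → ℝ, all s ≤ t and all x, y ∈ H, |∫ φ d(P_{s,t}(x)) − ∫ φ d(P_{s,t}(y))| ≤ c ‖φ‖_∞ e^{−γ(t−s)} (1 + ‖x‖² + ‖y‖²). If for some s ∈ ℝ the second moment m_s := ∫ ‖y‖² dμ_s(y) is finite, then for all t ≥ s, all x ∈ H and every bounded measurable φ : H → ℝ, |∫ φ d(P_{s,t}(x)) − ∫ φ dμ_t| ≤ c ‖φ‖_∞ e^{−γ(t−s)} (1 + ‖x‖² + m_s). -/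
/-!
Since `μ t = (μ s).bind (P s t)`, the integral of `φ` against `μ t` is the `μ s`-average of
`y ↦ ∫ φ d(P s t y)`. The difference in question is therefore a `μ s`-average of differences
`∫ φ d(P s t x) - ∫ φ d(P s t y)`, each controlled by the mixing bound, and averaging the weight
`1 + ‖x‖ ^ 2 + ‖y‖ ^ 2` over `μ s` produces the second moment.
-/

open MeasureTheory ProbabilityTheory

section

variable {X Y E : Type*} [MeasurableSpace X] [MeasurableSpace Y]
  [NormedAddCommGroup E] [NormedSpace ℝ E]

namespace MeasureTheory

theorem Integrable.integral_bind {μ : Measure X} {κ : Kernel X Y} {f : Y → E}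
    (hf : Integrable f (μ.bind κ)) : Integrable (fun y ↦ ∫ z, f z ∂κ y) μ := by
  rw [Measure.comp_eq_comp_const_apply] at hf
  simpa using hf.integral_comp

theorem Measure.integral_bind {μ : Measure X} {κ : Kernel X Y} {f : Y → E}
    (hf : Integrable f (μ.bind κ)) : ∫ z, f z ∂(μ.bind κ) = ∫ y, ∫ z, f z ∂κ y ∂μ := by
  rw [Measure.comp_eq_comp_const_apply] at hf ⊢
  simpa using Kernel.integral_comp hf

end MeasureTheory

theorem norm_integral_sub_integral_bind_le [CompleteSpace E] {ν : Measure X}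
    [IsProbabilityMeasure ν] {κ : Kernel X Y} {f : Y → E} (hf : Integrable f (ν.bind κ))
    (x : X) {w : X → ℝ} (hw : Integrable w ν)
    (hxw : ∀ y, ‖∫ z, f z ∂κ x - ∫ z, f z ∂κ y‖ ≤ w y) :
    ‖∫ z, f z ∂κ x - ∫ z, f z ∂(ν.bind κ)‖ ≤ ∫ y, w y ∂ν := by
  have haverage : ∫ z, f z ∂κ x - ∫ z, f z ∂(ν.bind κ) =
      ∫ y, (∫ z, f z ∂κ x - ∫ z, f z ∂κ y) ∂ν := by
    rw [integral_sub (integrable_const _) hf.integral_bind, Measure.integral_bind hf,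
      integral_const, probReal_univ, one_smul]
  rw [haverage]
  exact norm_integral_le_of_norm_le hw (ae_of_all _ hxw)

end

theorem exponential_convergence_to_evolutionary_system_general
    {H : Type*} [NormedAddCommGroup H] [MeasurableSpace H]
    (P : ℝ → ℝ → Kernel H H)
    (μ : ℝ → Measure H) (hμprob : ∀ t, IsProbabilityMeasure (μ t))
    (hμ : ∀ s t : ℝ, s ≤ t → (μ s).bind ⇑(P s t) = μ t)
    (c γ : ℝ)
    (hmix : ∀ φ : H → ℝ, Measurable φ → ∀ B : ℝ, (∀ x, |φ x| ≤ B) →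
      ∀ s t : ℝ, s ≤ t → ∀ x y : H,
        |(∫ z, φ z ∂(P s t x)) - ∫ z, φ z ∂(P s t y)| ≤
          c * B * Real.exp (-γ * (t - s)) * (1 + ‖x‖ ^ 2 + ‖y‖ ^ 2))
    (s : ℝ) (hms : Integrable (fun y => ‖y‖ ^ 2) (μ s)) :
    ∀ t : ℝ, s ≤ t → ∀ x : H, ∀ φ : H → ℝ, Measurable φ →
      ∀ B : ℝ, (∀ z, |φ z| ≤ B) →
      |(∫ z, φ z ∂(P s t x)) - ∫ z, φ z ∂(μ t)| ≤
        c * B * Real.exp (-γ * (t - s)) * (1 + ‖x‖ ^ 2 + ∫ y, ‖y‖ ^ 2 ∂(μ s)) := by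
  intro t hst x φ hφ B hB
  have := hμprob s
  have := hμprob t
  have hφint : Integrable φ (μ t) :=
    .of_bound hφ.aestronglyMeasurable B (ae_of_all _ hB)
  have hweight : Integrable
      (fun y ↦ c * B * Real.exp (-γ * (t - s)) * (1 + ‖x‖ ^ 2 + ‖y‖ ^ 2)) (μ s) :=
    ((integrable_const _).add hms).const_mul _
  rw [← hμ s t hst] at hφint ⊢
  calc |(∫ z, φ z ∂(P s t x)) - ∫ z, φ z ∂((μ s).bind (P s t))|
      ≤ ∫ y, c * B * Real.exp (-γ * (t - s)) * (1 + ‖x‖ ^ 2 + ‖y‖ ^ 2) ∂(μ s) :=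
        norm_integral_sub_integral_bind_le hφint x hweight (hmix φ hφ B hB s t hst x)
    _ = c * B * Real.exp (-γ * (t - s)) * (1 + ‖x‖ ^ 2 + ∫ y, ‖y‖ ^ 2 ∂(μ s)) := by
        rw [integral_const_mul, integral_add (integrable_const _) hms]
        simp

/-- Estimate (6.9): an exponential mixing bound for the transition operators combined
with the evolutionary system relation yields exponential convergence of observables
to the evolutionary system of measures.  The supremum norm of a bounded measurable
`φ` is represented by quantifying over all uniform bounds `B`. -/
theorem exponential_convergence_to_evolutionary_system
    {H : Type*} [NormedAddCommGroup H] [MeasurableSpace H] [BorelSpace H]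
    (P : ℝ → ℝ → Kernel H H) [∀ s t, IsMarkovKernel (P s t)]
    (μ : ℝ → Measure H) (hμprob : ∀ t, IsProbabilityMeasure (μ t))
    (hμ : ∀ s t : ℝ, s ≤ t → (μ s).bind ⇑(P s t) = μ t)
    (c γ : ℝ) (hc : 0 < c) (hγ : 0 < γ)
    (hmix : ∀ φ : H → ℝ, Measurable φ → ∀ B : ℝ, (∀ x, |φ x| ≤ B) →
      ∀ s t : ℝ, s ≤ t → ∀ x y : H,
        |(∫ z, φ z ∂(P s t x)) - ∫ z, φ z ∂(P s t y)| ≤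
          c * B * Real.exp (-γ * (t - s)) * (1 + ‖x‖ ^ 2 + ‖y‖ ^ 2))
    (s : ℝ) (hms : Integrable (fun y => ‖y‖ ^ 2) (μ s)) :
    ∀ t : ℝ, s ≤ t → ∀ x : H, ∀ φ : H → ℝ, Measurable φ →
      ∀ B : ℝ, (∀ z, |φ z| ≤ B) →
      |(∫ z, φ z ∂(P s t x)) - ∫ z, φ z ∂(μ t)| ≤
        c * B * Real.exp (-γ * (t - s)) * (1 + ‖x‖ ^ 2 + ∫ y, ‖y‖ ^ 2 ∂(μ s)) :=
  exponential_convergence_to_evolutionary_system_general P μ hμprob hμ c γ hmix s hms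
end

section
/- Let H be a measurable space and let P be a Markov kernel on H such that for all x, y ∈ H the probability measures P(x) and P(y) are mutually absolutely continuous. Then: (1) every P-invariant probability measure μ is ergodic, i.e. every measurable set Γ ⊆ H with P(x)(Γ) = 1_Γ(x) for μ-almost every x satisfies μ(Γ) = 0 or μ(Γ) = 1; (2) P admits at most one invariant probability measure. -/
/-!
A set `Γ` with `P x Γ = 1_Γ x` almost everywhere has `P x Γ = 1` at almost every point of `Γ` and
`P x Γ = 0` at almost every point of `Γᶜ`; since all the `P x` are equivalent, one of these two
parts must be null.

For two invariant probability measures, the mutually singular parts `ρ = μ₁ - μ₂` and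
`τ = μ₂ - μ₁` satisfy `μ₂ + ρ = μ₁ + τ`. As `P` preserves mass, comparing both sides after one step
on a set `S` carrying `τ` but not `ρ` shows that `P` sends `ρ`-almost every point outside `S` and
`τ`-almost every point inside `S`. By the same equivalence, `ρ = 0` or `τ = 0`, and then
`μ₁ = μ₂` because both have mass one.
-/

open MeasureTheory ProbabilityTheory

namespace MeasureTheory.Measure

variable {α : Type*} [MeasurableSpace α]

theorem add_sub_eq_add_sub (μ ν : Measure α) [IsFiniteMeasure μ] [IsFiniteMeasure ν] :
    μ + (ν - μ) = ν + (μ - ν) := by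
  have h := sub_toSignedMeasure_eq_toSignedMeasure_sub (μ := μ) (ν := ν)
  rw [sub_eq_sub_iff_add_eq_add] at h
  rw [← toSignedMeasure_eq_toSignedMeasure_iff, toSignedMeasure_add, toSignedMeasure_add, h,
    add_comm]

end MeasureTheory.Measure

namespace ProbabilityTheory.Kernel

variable {α : Type*} [MeasurableSpace α] {P : Kernel α α}

lemma eq_zero_or_eq_zero_of_ae_apply (hreg : ∀ x y, P x ≪ P y) {S : Set α}
    {ν₀ ν₁ : Measure α} (h₀ : ∀ᵐ x ∂ν₀, P x S = 0) (h₁ : ∀ᵐ x ∂ν₁, P x S = 1) :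
    ν₀ = 0 ∨ ν₁ = 0 := by
  by_contra! hne
  have := ae_neBot.mpr hne.1
  have := ae_neBot.mpr hne.2
  obtain ⟨x, hx⟩ := h₀.exists
  obtain ⟨y, hy⟩ := h₁.exists
  simpa [hy] using hreg y x hx

lemma measure_eq_zero_or_eq_one_of_ae_apply_eq_indicator (hreg : ∀ x y, P x ≪ P y)
    {μ : Measure α} [IsProbabilityMeasure μ] {Γ : Set α} (hΓ : MeasurableSet Γ)
    (hae : ∀ᵐ x ∂μ, P x Γ = Γ.indicator 1 x) : μ Γ = 0 ∨ μ Γ = 1 := by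
  have hout : ∀ᵐ x ∂μ.restrict Γᶜ, P x Γ = 0 := by
    filter_upwards [ae_restrict_of_ae hae, ae_restrict_mem hΓ.compl] with x hx hxΓ
    rwa [Set.indicator_of_notMem hxΓ] at hx
  have hin : ∀ᵐ x ∂μ.restrict Γ, P x Γ = 1 := by
    filter_upwards [ae_restrict_of_ae hae, ae_restrict_mem hΓ] with x hx hxΓ
    rwa [Set.indicator_of_mem hxΓ] at hx
  rcases eq_zero_or_eq_zero_of_ae_apply hreg hout hin with h | h
  · exact Or.inr ((prob_compl_eq_zero_iff hΓ).mp (by simpa using h))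
  · exact Or.inl (by simpa using h)

/-- Applying `P` to `μ₂ + (μ₁ - μ₂) = μ₁ + (μ₂ - μ₁)` and evaluating at `S` gives
`(μ₁ - μ₂).bind P S + (μ₂ - μ₁) S = (μ₂ - μ₁).bind P S`, and the right side is at most
`(μ₂ - μ₁) S` because `P` preserves the mass of `μ₂ - μ₁`, which lives on `S`. -/
lemma ae_sub_apply_eq_zero_of_bind_eq_self [IsMarkovKernel P] {μ₁ μ₂ : Measure α}
    [IsFiniteMeasure μ₁] [IsFiniteMeasure μ₂] (h₁ : μ₁.bind P = μ₁) (h₂ : μ₂.bind P = μ₂)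
    {S : Set α} (hS : MeasurableSet S) (hρ : (μ₁ - μ₂) S = 0) (hτ : (μ₂ - μ₁) Sᶜ = 0) :
    ∀ᵐ x ∂(μ₁ - μ₂), P x S = 0 := by
  set ρ := μ₁ - μ₂
  set τ := μ₂ - μ₁
  have hsum : μ₂ + ρ = μ₁ + τ := Measure.add_sub_eq_add_sub μ₂ μ₁
  have hsumP : μ₂ + ρ.bind P = μ₁ + τ.bind P := by
    rw [← h₁, ← h₂, ← Measure.comp_add, ← Measure.comp_add, hsum]
  have hτP : τ.bind P S ≤ τ S := calc
    τ.bind P S ≤ τ.bind P Set.univ := measure_mono (Set.subset_univ _)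
    _ = τ S := by rw [Measure.comp_apply_univ, ← measure_add_measure_compl hS, hτ, add_zero]
  have hρP : μ₁ S + τ S + ρ.bind P S ≤ μ₁ S + τ S + 0 := calc
    μ₁ S + τ S + ρ.bind P S = μ₂ S + ρ.bind P S := by
      rw [← Measure.add_apply μ₁, ← hsum, Measure.add_apply, hρ, add_zero]
    _ = μ₁ S + τ.bind P S := by rw [← Measure.add_apply, hsumP, Measure.add_apply]
    _ ≤ μ₁ S + τ S + 0 := by rw [add_zero]; gcongr
  have hρP_zero := (ENNReal.add_le_add_iff_left (by finiteness)).mp hρP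
  rwa [Measure.bind_apply hS P.aemeasurable, nonpos_iff_eq_zero,
    lintegral_eq_zero_iff (P.measurable_coe hS)] at hρP_zero

lemma eq_of_bind_eq_self [IsMarkovKernel P] (hreg : ∀ x y, P x ≪ P y) {μ₁ μ₂ : Measure α}
    [IsProbabilityMeasure μ₁] [IsProbabilityMeasure μ₂] (h₁ : μ₁.bind P = μ₁)
    (h₂ : μ₂.bind P = μ₂) : μ₁ = μ₂ := by
  obtain ⟨S, hS, hρ, hτ⟩ := Measure.mutually_singular_measure_sub (μ := μ₁) (ν := μ₂)
  have hout : ∀ᵐ x ∂(μ₁ - μ₂), P x S = 0 := ae_sub_apply_eq_zero_of_bind_eq_self h₁ h₂ hS hρ hτ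
  have hin : ∀ᵐ x ∂(μ₂ - μ₁), P x S = 1 := by
    filter_upwards [ae_sub_apply_eq_zero_of_bind_eq_self h₂ h₁ hS.compl hτ
      (by rwa [compl_compl])] with x hx
    exact (prob_compl_eq_zero_iff hS).mp hx
  have hsum := Measure.add_sub_eq_add_sub μ₁ μ₂
  rcases eq_zero_or_eq_zero_of_ae_apply hreg hout hin with h | h
  · rw [h, add_zero] at hsum
    exact Measure.eq_of_le_of_isProbabilityMeasure (hsum ▸ Measure.le_add_right le_rfl)
  · rw [h, add_zero] at hsum
    exact (Measure.eq_of_le_of_isProbabilityMeasure (hsum ▸ Measure.le_add_right le_rfl)).symm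

end ProbabilityTheory.Kernel

/-- Doob-type argument underlying Theorem 4.3: if all the transition probabilities of
a Markov kernel `P` are mutually absolutely continuous, then (1) every invariant
probability measure is ergodic and (2) there is at most one invariant probability
measure. -/
theorem regular_kernel_ergodic_and_unique
    {H : Type*} [MeasurableSpace H]
    (P : Kernel H H) [IsMarkovKernel P]
    (hreg : ∀ x y : H, P x ≪ P y ∧ P y ≪ P x) :
    ((∀ μ : Measure H, IsProbabilityMeasure μ → μ.bind ⇑P = μ →
        ∀ Γ : Set H, MeasurableSet Γ →
          (∀ᵐ x ∂μ, P x Γ = Γ.indicator 1 x) →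
          μ Γ = 0 ∨ μ Γ = 1) ∧
      (∀ μ₁ μ₂ : Measure H, IsProbabilityMeasure μ₁ → IsProbabilityMeasure μ₂ →
        μ₁.bind ⇑P = μ₁ → μ₂.bind ⇑P = μ₂ → μ₁ = μ₂)) := by
  have hac : ∀ x y, P x ≪ P y := fun x y => (hreg x y).1
  exact ⟨fun _ _ _ _ hΓ hae =>
      Kernel.measure_eq_zero_or_eq_one_of_ae_apply_eq_indicator hac hΓ hae,
    fun _ _ _ _ h₁ h₂ => Kernel.eq_of_bind_eq_self hac h₁ h₂⟩
end

section
/- Let H be a measurable space, P a Markov kernel on H, μ¹ and μ² probability measures on H, and A ⊆ H a measurable set. For probability measures ρ¹, ρ² on H write d_TV(ρ¹, ρ²) = sup over measurable sets E ⊆ H of |ρ¹(E) − ρ²(E)|. Then d_TV(μ¹.bind P, μ².bind P) ≤ 1 − min(μ¹(A), μ²(A)) · (1 − sup_{y, z ∈ A} d_TV(P(y), P(z))). -/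
open MeasureTheory ProbabilityTheory

/-- The total variation distance between two measures, as the supremum over
measurable sets `E` of `|ρ₁(E) − ρ₂(E)|`. -/
noncomputable def dTV {H : Type*} [MeasurableSpace H] (ρ₁ ρ₂ : Measure H) : ℝ :=
  ⨆ E : {E : Set H // MeasurableSet E}, |(ρ₁ E.1).toReal - (ρ₂ E.1).toReal|

/-!
Fix a measurable set `E` and put `f y = P(y)(E) ∈ [0, 1]`, so that `(μ.bind P)(E) = ∫ f dμ`.
With `s = sup_A f` and `i = inf_A f` we have `s - i ≤ D := sup_{y,z ∈ A} d_TV(P(y), P(z))`, and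
splitting the integrals along `A` gives `∫ f dμ₁ ≤ 1 - μ₁(A)(1 - s)` and `∫ f dμ₂ ≥ μ₂(A) i`.
Since `1 - s` and `i` are nonnegative, both `μ₁(A)` and `μ₂(A)` may be replaced by their
minimum `m`, and the difference is at most `1 - m(1 - (s - i)) ≤ 1 - m(1 - D)`.
-/

section dTV

variable {X : Type*} [MeasurableSpace X]

lemma dTV_nonneg (ρ₁ ρ₂ : Measure X) : 0 ≤ dTV ρ₁ ρ₂ :=
  Real.iSup_nonneg fun _ => abs_nonneg _

variable (ρ₁ ρ₂ : Measure X) [IsProbabilityMeasure ρ₁] [IsProbabilityMeasure ρ₂]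

lemma abs_measureReal_sub_le_one (E : Set X) : |ρ₁.real E - ρ₂.real E| ≤ 1 :=
  abs_sub_le_of_nonneg_of_le measureReal_nonneg measureReal_le_one measureReal_nonneg
    measureReal_le_one

lemma dTV_le_one : dTV ρ₁ ρ₂ ≤ 1 :=
  ciSup_le fun E => abs_measureReal_sub_le_one ρ₁ ρ₂ E.1

lemma abs_measureReal_sub_le_dTV {E : Set X} (hE : MeasurableSet E) :
    |ρ₁.real E - ρ₂.real E| ≤ dTV ρ₁ ρ₂ :=
  le_ciSup (f := fun E : {E : Set X // MeasurableSet E} => |ρ₁.real E.1 - ρ₂.real E.1|)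
    ⟨1, Set.forall_mem_range.2 fun E => abs_measureReal_sub_le_one ρ₁ ρ₂ E.1⟩ ⟨E, hE⟩

end dTV

section UnitIntervalValued

variable {X : Type*} [MeasurableSpace X] {μ ν : Measure X} {f : X → ℝ} {A : Set X}

lemma measureReal_mul_le_integral_of_le_on [IsFiniteMeasure μ] (hA : MeasurableSet A)
    (hf : Integrable f μ) (hf0 : ∀ x, 0 ≤ f x) {i : ℝ} (hi : ∀ x ∈ A, i ≤ f x) :
    μ.real A * i ≤ ∫ x, f x ∂μ :=
  calc μ.real A * i = i * μ.real A := mul_comm _ _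
    _ ≤ ∫ x in A, f x ∂μ :=
      setIntegral_ge_of_const_le_real hA (measure_ne_top μ A) hi hf.integrableOn
    _ ≤ ∫ x, f x ∂μ := setIntegral_le_integral hf (Filter.Eventually.of_forall hf0)

lemma integral_le_one_sub_of_le_on [IsProbabilityMeasure μ] (hA : MeasurableSet A)
    (hf : Integrable f μ) (hf1 : ∀ x, f x ≤ 1) {s : ℝ} (hs : ∀ x ∈ A, f x ≤ s) :
    ∫ x, f x ∂μ ≤ 1 - μ.real A * (1 - s) := by
  have := measureReal_mul_le_integral_of_le_on (f := fun x => 1 - f x) hA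
    ((integrable_const 1).sub hf) (fun x => sub_nonneg.2 (hf1 x))
    fun x hx => sub_le_sub_left (hs x hx) 1
  rw [integral_sub (integrable_const 1) hf, integral_const, probReal_univ, one_smul] at this
  linarith

lemma integral_sub_integral_le_of_forall_sub_le [IsProbabilityMeasure μ] [IsProbabilityMeasure ν]
    (hA : MeasurableSet A) (hfμ : Integrable f μ) (hfν : Integrable f ν) (hf0 : ∀ x, 0 ≤ f x)
    (hf1 : ∀ x, f x ≤ 1) {D : ℝ} (hD0 : 0 ≤ D) (hD : ∀ y ∈ A, ∀ z ∈ A, f y - f z ≤ D) :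
    ∫ x, f x ∂μ - ∫ x, f x ∂ν ≤ 1 - min (μ.real A) (ν.real A) * (1 - D) := by
  set s := sSup (f '' A)
  set i := sInf (f '' A)
  have hs1 : s ≤ 1 := Real.sSup_le (Set.forall_mem_image.2 fun x _ => hf1 x) zero_le_one
  have hi0 : 0 ≤ i := Real.sInf_nonneg (Set.forall_mem_image.2 fun x _ => hf0 x)
  have hfs : ∀ x ∈ A, f x ≤ s := fun x hx =>
    le_csSup ⟨1, Set.forall_mem_image.2 fun x _ => hf1 x⟩ (Set.mem_image_of_mem f hx)
  have hfi : ∀ x ∈ A, i ≤ f x := fun x hx =>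
    csInf_le ⟨0, Set.forall_mem_image.2 fun x _ => hf0 x⟩ (Set.mem_image_of_mem f hx)
  have hsi : s ≤ i + D := by
    refine Real.sSup_le (Set.forall_mem_image.2 fun y hy => ?_) (add_nonneg hi0 hD0)
    suffices f y - D ≤ i by linarith
    exact le_csInf ⟨f y, Set.mem_image_of_mem f hy⟩
      (Set.forall_mem_image.2 fun z hz => by linarith [hD y hy z hz])
  have hμ := integral_le_one_sub_of_le_on hA hfμ hf1 hfs
  have hν := measureReal_mul_le_integral_of_le_on hA hfν hf0 hfi
  set m := min (μ.real A) (ν.real A)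
  have hm0 : 0 ≤ m := le_min measureReal_nonneg measureReal_nonneg
  linarith [mul_le_mul_of_nonneg_right (min_le_left (μ.real A) (ν.real A)) (sub_nonneg.2 hs1),
    mul_le_mul_of_nonneg_right (min_le_right (μ.real A) (ν.real A)) hi0,
    mul_le_mul_of_nonneg_left hsi hm0]

end UnitIntervalValued

section Kernel

variable {X Y : Type*} [MeasurableSpace X] [MeasurableSpace Y] (P : Kernel X Y)

lemma measureReal_bind_eq_integral [IsFiniteKernel P] (μ : Measure X) {E : Set Y}
    (hE : MeasurableSet E) : (μ.bind P).real E = ∫ x, (P x).real E ∂μ := by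
  rw [measureReal_def, Measure.bind_apply hE P.aemeasurable]
  exact (integral_toReal (P.measurable_coe hE).aemeasurable
    (ae_of_all _ fun x => measure_lt_top _ _)).symm

variable [IsMarkovKernel P]

lemma integrable_measureReal_apply (μ : Measure X) [IsFiniteMeasure μ] {E : Set Y}
    (hE : MeasurableSet E) : Integrable (fun x => (P x).real E) μ :=
  Integrable.of_bound (P.measurable_coe hE).ennreal_toReal.aestronglyMeasurable 1
    (ae_of_all _ fun x => by
      rw [Real.norm_of_nonneg measureReal_nonneg]; exact measureReal_le_one)

lemma dTV_le_iSup_dTV {A : Set X} {y z : X} (hy : y ∈ A) (hz : z ∈ A) :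
    dTV (P y) (P z) ≤ ⨆ (y : A) (z : A), dTV (P (y : X)) (P (z : X)) :=
  (le_ciSup (f := fun z : A => dTV (P y) (P (z : X)))
    ⟨1, Set.forall_mem_range.2 fun _ => dTV_le_one _ _⟩ ⟨z, hz⟩).trans
  (le_ciSup (f := fun y : A => ⨆ z : A, dTV (P (y : X)) (P (z : X)))
    ⟨1, Set.forall_mem_range.2 fun _ => Real.iSup_le (fun _ => dTV_le_one _ _) zero_le_one⟩
    ⟨y, hy⟩)

variable (μ ν : Measure X) [IsProbabilityMeasure μ] [IsProbabilityMeasure ν]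
  {A : Set X} {D : ℝ}

lemma measureReal_bind_sub_le (hA : MeasurableSet A) (hD0 : 0 ≤ D)
    (hD : ∀ y ∈ A, ∀ z ∈ A, dTV (P y) (P z) ≤ D) {E : Set Y} (hE : MeasurableSet E) :
    (μ.bind P).real E - (ν.bind P).real E ≤ 1 - min (μ.real A) (ν.real A) * (1 - D) := by
  rw [measureReal_bind_eq_integral P μ hE, measureReal_bind_eq_integral P ν hE]
  refine integral_sub_integral_le_of_forall_sub_le hA (integrable_measureReal_apply P μ hE)
    (integrable_measureReal_apply P ν hE) (fun _ => measureReal_nonneg)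
    (fun _ => measureReal_le_one) hD0 fun y hy z hz => ?_
  exact (le_abs_self _).trans ((abs_measureReal_sub_le_dTV _ _ hE).trans (hD y hy z hz))

lemma dTV_bind_le_of_forall_dTV_le (hA : MeasurableSet A) (hD0 : 0 ≤ D)
    (hD : ∀ y ∈ A, ∀ z ∈ A, dTV (P y) (P z) ≤ D) :
    dTV (μ.bind P) (ν.bind P) ≤ 1 - min (μ.real A) (ν.real A) * (1 - D) := by
  refine ciSup_le fun E => abs_sub_le_iff.2 ⟨?_, ?_⟩
  · exact measureReal_bind_sub_le P μ ν hA hD0 hD E.2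
  · rw [min_comm]
    exact measureReal_bind_sub_le P ν μ hA hD0 hD E.2

end Kernel

/-- The total variation instance of Lemma 5.6 (the limit case `d_n ↑ 1` of the
Wasserstein identity (5.4)):
`d_TV(μ¹P, μ²P) ≤ 1 − min(μ¹(A), μ²(A)) (1 − sup_{y,z ∈ A} d_TV(P(y), P(z)))`. -/
theorem dTV_bind_le
    {H : Type*} [MeasurableSpace H]
    (P : Kernel H H) [IsMarkovKernel P]
    (μ₁ μ₂ : Measure H) [IsProbabilityMeasure μ₁] [IsProbabilityMeasure μ₂]
    (A : Set H) (hA : MeasurableSet A) :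
    dTV (μ₁.bind ⇑P) (μ₂.bind ⇑P) ≤
      1 - min (μ₁ A).toReal (μ₂ A).toReal *
        (1 - ⨆ (y : A) (z : A), dTV (P (y : H)) (P (z : H))) := by
  exact dTV_bind_le_of_forall_dTV_le P μ₁ μ₂ hA
    (Real.iSup_nonneg fun _ => Real.iSup_nonneg fun _ => dTV_nonneg _ _)
    fun _ hy _ hz => dTV_le_iSup_dTV P hy hz
end
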